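/- arXiv:1206.2485 — 4 statements merged into one kernel-verified Lean document; each statement's English description precedes it below -/
import Mathlib

section
/- Let Ω be a Polish space with Borel σ-field B, P a Borel probability measure on Ω, and T : Ω → Ω a measurable map preserving P (i.e. P ∘ T^{-1} = P). Then (1/N) ∑_{k=0}^{N-1} P(A ∩ T^{-k}B) → P(A)·P(B) for all A, B ∈ B (the Cesàro characterization of ergodicity of T) if and only if the averaged measures (1/N) ∑_{k=0}^{N-1} P ∘ (T^0, T^k)^{-1} (probability measures on Ω × Ω, where P ∘ (T^0, T^k)^{-1} is the law of ω ↦ (ω, T^k ω) under P) converge weakly to the product measure P ⊗ P as N → ∞. -/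
/-!
The Cesàro averages are the masses `μ_N (A × B)` of the averaged measures `μ_N`.

Forward direction: open rectangles form a π-system containing arbitrarily small neighbourhoods
of every point of the second countable space `Ω × Ω`, and setwise convergence on such a
π-system already forces weak convergence (inclusion–exclusion plus the portmanteau theorem).

Converse: every averaged measure has both marginals equal to `P`, like `P ⊗ P`. Hence shrinking
Borel sets `A, B` to closed `F ⊆ A, G ⊆ B` changes the mass of `A × B` by at most
`P (A \ F) + P (B \ G)`, uniformly in `N`, so the portmanteau bound
`limsup μ_N (F × G) ≤ (P ⊗ P) (F × G)` passes to `A × B`. Applied to `A × Bᶜ` inside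
`(A × B)ᶜ = (Aᶜ × Ω) ⊔ (A × Bᶜ)` it yields the matching `liminf` bound.
-/

open MeasureTheory Filter Topology Set
open scoped ENNReal

namespace MeasureTheory

variable {X Y ι : Type*} [MeasurableSpace X] [MeasurableSpace Y]

lemma Measure.measure_prod_le_add_fst_add_snd (ρ : Measure (X × Y))
    (A F : Set X) (B G : Set Y) :
    ρ (A ×ˢ B) ≤ ρ (F ×ˢ G) + ρ.fst (A \ F) + ρ.snd (B \ G) := by
  have hcover : A ×ˢ B ⊆ F ×ˢ G ∪ Prod.fst ⁻¹' (A \ F) ∪ Prod.snd ⁻¹' (B \ G) := by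
    rintro ⟨x, y⟩ ⟨hx, hy⟩
    by_cases hxF : x ∈ F <;> by_cases hyG : y ∈ G <;> simp_all
  calc ρ (A ×ˢ B) ≤ ρ (F ×ˢ G) + ρ (Prod.fst ⁻¹' (A \ F)) + ρ (Prod.snd ⁻¹' (B \ G)) :=
        (measure_mono hcover).trans <|
          (measure_union_le _ _).trans (add_le_add_left (measure_union_le _ _) _)
    _ ≤ ρ (F ×ˢ G) + ρ.fst (A \ F) + ρ.snd (B \ G) := by
        gcongr
        · exact Measure.le_map_apply measurable_fst.aemeasurable _
        · exact Measure.le_map_apply measurable_snd.aemeasurable _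

lemma Measure.measure_compl_prod (ρ : Measure (X × Y)) {A : Set X} {B : Set Y}
    (hA : MeasurableSet A) (hB : MeasurableSet B) :
    ρ (A ×ˢ B)ᶜ = ρ.fst Aᶜ + ρ (A ×ˢ Bᶜ) := by
  have hsplit : (A ×ˢ B)ᶜ = Prod.fst ⁻¹' Aᶜ ∪ A ×ˢ Bᶜ := by
    ext ⟨x, y⟩
    by_cases hx : x ∈ A <;> simp [hx]
  rw [hsplit, measure_union _ (hA.prod hB.compl), Measure.fst_apply hA.compl]
  exact Set.disjoint_left.mpr fun p hp hp' ↦ hp hp'.1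

variable [TopologicalSpace X] [TopologicalSpace Y] {l : Filter ι}

lemma ProbabilityMeasure.tendsto_of_forall_tendsto_prod
    [SecondCountableTopology X] [SecondCountableTopology Y]
    [OpensMeasurableSpace X] [OpensMeasurableSpace Y] [l.IsCountablyGenerated]
    {μ : ι → ProbabilityMeasure (X × Y)} {ν : ProbabilityMeasure (X × Y)}
    (h : ∀ s t, IsOpen s → IsOpen t →
      Tendsto (fun i ↦ (μ i : Measure (X × Y)) (s ×ˢ t)) l
        (𝓝 ((ν : Measure (X × Y)) (s ×ˢ t)))) :
    Tendsto μ l (𝓝 ν) := by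
  refine (isPiSystem_isOpen.prod isPiSystem_isOpen).tendsto_probabilityMeasure_of_tendsto_of_mem
    ?_ ?_ ?_
  · rintro _ ⟨s, hs, t, ht, rfl⟩
    exact (hs.prod ht).measurableSet
  · intro u hu x hx
    obtain ⟨s, t, hs, ht, hxs, hxt, hst⟩ := isOpen_prod_iff.mp hu x.1 x.2 hx
    exact ⟨s ×ˢ t, mem_image2_of_mem hs ht, (hs.prod ht).mem_nhds ⟨hxs, hxt⟩, hst⟩
  · rintro _ ⟨s, hs, t, ht, rfl⟩
    have := h s t hs ht
    simp only [← ProbabilityMeasure.ennreal_coeFn_eq_coeFn_toMeasure] at this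
    exact ENNReal.tendsto_coe.mp this

section ConstantMarginals

variable [TopologicalSpace.PseudoMetrizableSpace X] [BorelSpace X]
  [TopologicalSpace.PseudoMetrizableSpace Y] [BorelSpace Y] [SecondCountableTopologyEither X Y]
  {μ : ι → ProbabilityMeasure (X × Y)} {ν : ProbabilityMeasure (X × Y)}

lemma ProbabilityMeasure.limsup_measure_prod_le_of_tendsto (hμ : Tendsto μ l (𝓝 ν))
    (hfst : ∀ i, (μ i : Measure (X × Y)).fst = (ν : Measure (X × Y)).fst)
    (hsnd : ∀ i, (μ i : Measure (X × Y)).snd = (ν : Measure (X × Y)).snd)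
    {A : Set X} {B : Set Y} (hA : MeasurableSet A) (hB : MeasurableSet B) :
    limsup (fun i ↦ (μ i : Measure (X × Y)) (A ×ˢ B)) l ≤ (ν : Measure (X × Y)) (A ×ˢ B) := by
  rcases l.eq_or_neBot with rfl | _
  · simp
  refine ENNReal.le_of_forall_pos_le_add fun ε hε _ ↦ ?_
  have hε2 : (ε / 2 : ℝ≥0∞) ≠ 0 := by simpa using hε.ne'
  obtain ⟨F, hFA, hF, hAF⟩ :=
    hA.exists_isClosed_sdiff_lt (measure_ne_top (ν : Measure (X × Y)).fst A) hε2
  obtain ⟨G, hGB, hG, hBG⟩ :=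
    hB.exists_isClosed_sdiff_lt (measure_ne_top (ν : Measure (X × Y)).snd B) hε2
  have hbound (i : ι) :
      (μ i : Measure (X × Y)) (A ×ˢ B) ≤ (μ i : Measure (X × Y)) (F ×ˢ G) + ε := calc
    _ ≤ (μ i : Measure (X × Y)) (F ×ˢ G) + (ν : Measure (X × Y)).fst (A \ F)
        + (ν : Measure (X × Y)).snd (B \ G) := by
      simpa only [hfst i, hsnd i] using
        (μ i : Measure (X × Y)).measure_prod_le_add_fst_add_snd A F B G
    _ ≤ (μ i : Measure (X × Y)) (F ×ˢ G) + (ε / 2 + ε / 2) := by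
      rw [add_assoc]; gcongr
    _ = _ := by rw [ENNReal.add_halves]
  calc limsup (fun i ↦ (μ i : Measure (X × Y)) (A ×ˢ B)) l
      ≤ limsup (fun i ↦ (μ i : Measure (X × Y)) (F ×ˢ G)) l + ε :=
        (limsup_le_limsup (.of_forall hbound)).trans_eq
          (limsup_add_const _ _ _ (by isBoundedDefault) (by isBoundedDefault))
    _ ≤ (ν : Measure (X × Y)) (F ×ˢ G) + ε := by
        gcongr; exact ProbabilityMeasure.limsup_measure_closed_le_of_tendsto hμ (hF.prod hG)
    _ ≤ (ν : Measure (X × Y)) (A ×ˢ B) + ε := by gcongr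

lemma ProbabilityMeasure.tendsto_measure_prod_of_tendsto (hμ : Tendsto μ l (𝓝 ν))
    (hfst : ∀ i, (μ i : Measure (X × Y)).fst = (ν : Measure (X × Y)).fst)
    (hsnd : ∀ i, (μ i : Measure (X × Y)).snd = (ν : Measure (X × Y)).snd)
    {A : Set X} {B : Set Y} (hA : MeasurableSet A) (hB : MeasurableSet B) :
    Tendsto (fun i ↦ (μ i : Measure (X × Y)) (A ×ˢ B)) l
      (𝓝 ((ν : Measure (X × Y)) (A ×ˢ B))) := by
  rcases l.eq_or_neBot with rfl | _
  · simp
  have hcompl : limsup (fun i ↦ (μ i : Measure (X × Y)) (A ×ˢ B)ᶜ) l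
      ≤ (ν : Measure (X × Y)) (A ×ˢ B)ᶜ := by
    simp only [Measure.measure_compl_prod _ hA hB, hfst]
    rw [limsup_const_add _ _ _ (by isBoundedDefault) (by isBoundedDefault)]
    gcongr
    exact limsup_measure_prod_le_of_tendsto hμ hfst hsnd hA hB.compl
  exact tendsto_of_le_liminf_of_limsup_le
    (le_measure_liminf_of_limsup_measure_compl_le (hA.prod hB) hcompl)
    (limsup_measure_prod_le_of_tendsto hμ hfst hsnd hA hB)

end ConstantMarginals

section Cesaro

variable {Ω : Type*} [MeasurableSpace Ω] {P : Measure Ω} {T : Ω → Ω} {N : ℕ}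

variable (P T) in
noncomputable def cesaroGraphMeasure (N : ℕ) : Measure (Ω × Ω) :=
  (N : ℝ≥0∞)⁻¹ • ∑ k ∈ Finset.range N, P.map (fun ω ↦ (ω, T^[k] ω))

lemma cesaroGraphMeasure_apply (hT : Measurable T) {s : Set (Ω × Ω)} (hs : MeasurableSet s) :
    cesaroGraphMeasure P T N s
      = (∑ k ∈ Finset.range N, P ((fun ω ↦ (ω, T^[k] ω)) ⁻¹' s)) / N := by
  rw [cesaroGraphMeasure, Measure.smul_apply, Measure.finsetSum_apply, smul_eq_mul,
    ENNReal.div_eq_inv_mul]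
  congr 1
  exact Finset.sum_congr rfl fun k _ ↦
    Measure.map_apply (measurable_id.prodMk (hT.iterate k)) hs

lemma cesaroGraphMeasure_prod (hT : Measurable T) {A B : Set Ω}
    (hA : MeasurableSet A) (hB : MeasurableSet B) :
    cesaroGraphMeasure P T N (A ×ˢ B) = (∑ k ∈ Finset.range N, P (A ∩ T^[k] ⁻¹' B)) / N :=
  cesaroGraphMeasure_apply hT (hA.prod hB)

lemma cesaroGraphMeasure_apply_eq_of_forall (hT : Measurable T) (hN : N ≠ 0) {s : Set (Ω × Ω)}
    (hs : MeasurableSet s) {c : ℝ≥0∞} (hc : ∀ k, P ((fun ω ↦ (ω, T^[k] ω)) ⁻¹' s) = c) :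
    cesaroGraphMeasure P T N s = c := by
  rw [cesaroGraphMeasure_apply hT hs, Finset.sum_congr rfl fun k _ ↦ hc k, Finset.sum_const,
    Finset.card_range, nsmul_eq_mul, mul_comm,
    ENNReal.mul_div_cancel_right (Nat.cast_ne_zero.mpr hN) (ENNReal.natCast_ne_top N)]

lemma cesaroGraphMeasure_fst (hT : Measurable T) (hN : N ≠ 0) :
    (cesaroGraphMeasure P T N).fst = P := by
  ext s hs
  rw [Measure.fst_apply hs]
  exact cesaroGraphMeasure_apply_eq_of_forall hT hN (measurable_fst hs) fun _ ↦ rfl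

lemma cesaroGraphMeasure_snd (hT : MeasurePreserving T P P) (hN : N ≠ 0) :
    (cesaroGraphMeasure P T N).snd = P := by
  ext s hs
  rw [Measure.snd_apply hs]
  exact cesaroGraphMeasure_apply_eq_of_forall hT.measurable hN (measurable_snd hs) fun k ↦
    (hT.iterate k).measure_preimage hs.nullMeasurableSet

lemma isProbabilityMeasure_cesaroGraphMeasure [IsProbabilityMeasure P] (hT : Measurable T)
    (hN : N ≠ 0) : IsProbabilityMeasure (cesaroGraphMeasure P T N) :=
  ⟨by rw [← Measure.fst_univ, cesaroGraphMeasure_fst hT hN, measure_univ]⟩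

variable (P) in
/-- Indexed from `N + 1`: the average over the empty range is the zero measure. -/
noncomputable def cesaroGraphProbabilityMeasure [IsProbabilityMeasure P] (hT : Measurable T)
    (N : ℕ) : ProbabilityMeasure (Ω × Ω) :=
  ⟨cesaroGraphMeasure P T (N + 1), isProbabilityMeasure_cesaroGraphMeasure hT N.succ_ne_zero⟩

lemma tendsto_cesaroGraphProbabilityMeasure_prod_iff [IsProbabilityMeasure P]
    (hT : Measurable T) {A B : Set Ω} (hA : MeasurableSet A) (hB : MeasurableSet B) :
    Tendsto (fun N ↦ (cesaroGraphProbabilityMeasure P hT N : Measure (Ω × Ω)) (A ×ˢ B)) atTop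
        (𝓝 (P.prod P (A ×ˢ B))) ↔
      Tendsto (fun N : ℕ ↦ (∑ k ∈ Finset.range N, P (A ∩ T^[k] ⁻¹' B)) / N) atTop
        (𝓝 (P A * P B)) := by
  simp only [← cesaroGraphMeasure_prod hT hA hB, Measure.prod_prod]
  exact tendsto_add_atTop_iff_nat (f := fun N ↦ cesaroGraphMeasure P T N (A ×ˢ B)) 1

lemma tendsto_cesaroGraphProbabilityMeasure_iff
    [TopologicalSpace Ω] [OpensMeasurableSpace (Ω × Ω)]
    [IsProbabilityMeasure P] (hT : Measurable T) (ν : ProbabilityMeasure (Ω × Ω)) :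
    Tendsto (cesaroGraphProbabilityMeasure P hT) atTop (𝓝 ν) ↔
      ∀ f : BoundedContinuousFunction (Ω × Ω) ℝ, Tendsto
        (fun N ↦ ∫ p, f p ∂cesaroGraphMeasure P T N) atTop
        (𝓝 (∫ p, f p ∂(ν : Measure (Ω × Ω)))) := by
  rw [ProbabilityMeasure.tendsto_iff_forall_integral_tendsto]
  exact forall_congr' fun f ↦ tendsto_add_atTop_iff_nat
    (f := fun N ↦ ∫ p, f p ∂cesaroGraphMeasure P T N) 1

end Cesaro

end MeasureTheory

/-- Let `Ω` be a Polish space with Borel σ-field, `P` a Borel probability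
measure, and `T : Ω → Ω` a measurable map preserving `P`. Then the Cesàro averages
`(1/N) ∑_{k<N} P (A ∩ T⁻ᵏ B)` converge to `P A * P B` for all Borel `A, B` (the Cesàro
characterization of ergodicity) if and only if the averaged measures
`(1/N) ∑_{k<N} P ∘ (id, T^k)⁻¹` converge weakly to the product measure `P ⊗ P`. -/
theorem ergodic_cesaro_iff_weak_convergence
    {Ω : Type*} [TopologicalSpace Ω] [PolishSpace Ω] [MeasurableSpace Ω] [BorelSpace Ω]
    (P : Measure Ω) [IsProbabilityMeasure P]
    (T : Ω → Ω) (hT : Measurable T) (hpres : P.map T = P) :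
    (∀ A B : Set Ω, MeasurableSet A → MeasurableSet B →
        Tendsto (fun N : ℕ => (∑ k ∈ Finset.range N, P (A ∩ T^[k] ⁻¹' B)) / (N : ENNReal))
          atTop (𝓝 (P A * P B))) ↔
      (∀ f : BoundedContinuousFunction (Ω × Ω) ℝ,
        Tendsto
          (fun N : ℕ => ∫ p, f p
            ∂(((N : ENNReal)⁻¹) •
              ∑ k ∈ Finset.range N, P.map (fun ω => (ω, T^[k] ω))))
          atTop (𝓝 (∫ p, f p ∂(P.prod P)))) := by
  let ν : ProbabilityMeasure (Ω × Ω) := ⟨P.prod P, inferInstance⟩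
  have hfst (N : ℕ) : (cesaroGraphProbabilityMeasure P hT N : Measure (Ω × Ω)).fst
      = (ν : Measure (Ω × Ω)).fst :=
    (cesaroGraphMeasure_fst hT N.succ_ne_zero).trans Measure.fst_prod.symm
  have hsnd (N : ℕ) : (cesaroGraphProbabilityMeasure P hT N : Measure (Ω × Ω)).snd
      = (ν : Measure (Ω × Ω)).snd :=
    (cesaroGraphMeasure_snd ⟨hT, hpres⟩ N.succ_ne_zero).trans Measure.snd_prod.symm
  calc _ ↔ ∀ A B : Set Ω, MeasurableSet A → MeasurableSet B →
          Tendsto (fun N ↦ (cesaroGraphProbabilityMeasure P hT N : Measure (Ω × Ω)) (A ×ˢ B))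
            atTop (𝓝 ((ν : Measure (Ω × Ω)) (A ×ˢ B))) :=
        forall₄_congr fun A B hA hB ↦ (tendsto_cesaroGraphProbabilityMeasure_prod_iff hT hA hB).symm
    _ ↔ Tendsto (cesaroGraphProbabilityMeasure P hT) atTop (𝓝 ν) :=
        ⟨fun h ↦ ProbabilityMeasure.tendsto_of_forall_tendsto_prod fun s t hs ht ↦
          h s t hs.measurableSet ht.measurableSet,
        fun h A B hA hB ↦ ProbabilityMeasure.tendsto_measure_prod_of_tendsto h hfst hsnd hA hB⟩
    _ ↔ _ := tendsto_cesaroGraphProbabilityMeasure_iff hT ν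
end

section
/- Let (Ω, F, P) be a probability space and H : Ω → {closed subsets of [0,∞)} a random closed set whose graph {(t, ω) ∈ [0,∞) × Ω : t ∈ H(ω)} is product-measurable, and such that for every c > 0 and every t > 0, P(t ∈ H and H is porous at t) = P(ct ∈ H and H is porous at ct) (scaling invariance of the law of H). If H is porous at 1 almost surely, then P(1 ∉ H) = 1. -/
/-!
By the Lebesgue density theorem, the density of a measurable set `s ⊆ ℝ` tends to `1` at almost
every point of `s`, while a gap of length comparable to `ε` inside `(t - ε, t + ε)` keeps the
density at `t` bounded away from `1`; so porous points of `s` form a null set. Applied to the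
slices `H ω` and combined with Fubini, this makes `{t ∈ H, H porous at t}` a `P`-null event for
almost every `t > 0`, and scaling invariance carries this over to `t = 1`. Densities are taken
along the radii `1 / n` so that the exceptional set is product-measurable.
-/

open MeasureTheory Filter Topology

/-- `gapLength H x ε` is the supremum of the lengths of the intervals contained in
`(x - ε, x + ε) \ H`. -/
noncomputable def gapLength (H : Set ℝ) (x ε : ℝ) : ℝ :=
  sSup {l : ℝ | ∃ a b : ℝ, l = b - a ∧ Set.Ioo a b ⊆ Set.Ioo (x - ε) (x + ε) \ H}

/-- A set `H ⊆ ℝ` is porous at `x` if `limsup_{ε → 0+} gapLength H x ε / ε > 0`. -/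
def PorousAt (H : Set ℝ) (x : ℝ) : Prop :=
  0 < Filter.limsup (fun ε => gapLength H x ε / ε) (𝓝[>] (0 : ℝ))

open Set Metric
open scoped ENNReal

noncomputable def ballDensity (s : Set ℝ) (t r : ℝ) : ℝ≥0∞ :=
  volume (s ∩ closedBall t r) / volume (closedBall t r)

lemma PorousAt.exists_frequently_gap {s : Set ℝ} {t : ℝ} (h : PorousAt s t) :
    ∃ δ > 0, ∃ᶠ ε in 𝓝[>] (0 : ℝ),
      ∃ a b, δ * ε < b - a ∧ Ioo a b ⊆ Ioo (t - ε) (t + ε) \ s := by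
  set L := limsup (fun ε => gapLength s t ε / ε) (𝓝[>] (0 : ℝ))
  have hL : 0 < L := h
  have hcobdd :
      (𝓝[>] (0 : ℝ)).IsCoboundedUnder (· ≤ ·) (fun ε => gapLength s t ε / ε) := by
    by_contra hnot
    exact hL.ne' (Real.limsup_of_not_isCoboundedUnder hnot)
  refine ⟨L / 2, half_pos hL, ?_⟩
  refine ((frequently_lt_of_lt_limsup hcobdd (half_lt_self hL)).and_eventually
    self_mem_nhdsWithin).mono fun ε ⟨hlt, hε⟩ => ?_
  obtain ⟨_, ⟨a, b, rfl, hab⟩, hlt'⟩ :=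
    exists_lt_of_lt_csSup (by exact ⟨0, 0, 0, by simp⟩) ((lt_div_iff₀ hε).1 hlt)
  exact ⟨a, b, hlt', hab⟩

lemma measure_inter_div_add_measure_div_le_one {α : Type*} [MeasurableSpace α] {μ : Measure α}
    {s u B : Set α} (hu : MeasurableSet u) (huB : u ⊆ B \ s) :
    μ (s ∩ B) / μ B + μ u / μ B ≤ 1 := by
  rw [← ENNReal.add_div]
  refine ENNReal.div_le_of_le_mul ?_
  rw [one_mul, ← measure_union (disjoint_left.2 fun _ hx hxu => (huB hxu).2 hx.1) hu]
  exact measure_mono (union_subset inter_subset_right (huB.trans sdiff_subset))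

lemma ballDensity_le_of_gap {s : Set ℝ} {t ε r δ a b : ℝ} (hε : 0 < ε) (hεr : ε ≤ r)
    (hrε : r ≤ 2 * ε) (hδ : 0 ≤ δ) (hgap : δ * ε < b - a)
    (hab : Ioo a b ⊆ Ioo (t - ε) (t + ε) \ s) :
    ballDensity s t r ≤ 1 - ENNReal.ofReal (δ / 4) := by
  have hsub : Ioo a b ⊆ closedBall t r \ s := by
    refine hab.trans (sdiff_subset_sdiff_left ?_)
    rw [Real.closedBall_eq_Icc]
    exact Ioo_subset_Icc_self.trans (Icc_subset_Icc (by linarith) (by linarith))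
  have hgap_ratio : ENNReal.ofReal (δ / 4) ≤ volume (Ioo a b) / volume (closedBall t r) := by
    rw [Real.volume_Ioo, Real.volume_closedBall, ← ENNReal.ofReal_div_of_pos (by linarith)]
    exact ENNReal.ofReal_le_ofReal (by rw [le_div_iff₀ (by linarith)]; nlinarith)
  exact ENNReal.le_sub_of_add_le_right ENNReal.ofReal_ne_top <|
    (add_le_add le_rfl hgap_ratio).trans
      (measure_inter_div_add_measure_div_le_one measurableSet_Ioo hsub)

lemma inv_natFloor_inv_mem_Icc {ε : ℝ} (hε : 0 < ε) (hε1 : ε ≤ 1) :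
    (⌊ε⁻¹⌋₊ : ℝ)⁻¹ ∈ Icc ε (2 * ε) := by
  have hk1 : (1 : ℝ) ≤ ⌊ε⁻¹⌋₊ := by
    exact_mod_cast Nat.le_floor (by simpa using (one_le_inv₀ hε).2 hε1)
  have hk : (⌊ε⁻¹⌋₊ : ℝ) ≤ ε⁻¹ := Nat.floor_le (by positivity)
  have hk' : ε⁻¹ < ⌊ε⁻¹⌋₊ + 1 := Nat.lt_floor_add_one _
  constructor
  · simpa using inv_anti₀ (by positivity) hk
  · rw [inv_le_comm₀ (by positivity) (by positivity), mul_inv]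
    linarith

lemma PorousAt.not_tendsto_ballDensity {s : Set ℝ} {t : ℝ} (h : PorousAt s t) :
    ¬ Tendsto (fun n : ℕ => ballDensity s t (n : ℝ)⁻¹) atTop (𝓝 1) := by
  obtain ⟨δ, hδ, hfreq⟩ := h.exists_frequently_gap
  have hfloor : Tendsto (fun ε : ℝ => ⌊ε⁻¹⌋₊) (𝓝[>] 0) atTop :=
    tendsto_nat_floor_atTop.comp tendsto_inv_nhdsGT_zero
  have hsmall : ∀ᶠ ε in 𝓝[>] (0 : ℝ), ε ∈ Ioc 0 1 := Ioc_mem_nhdsGT one_pos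
  have hfreq_le : ∃ᶠ n : ℕ in atTop, ballDensity s t (n : ℝ)⁻¹ ≤ 1 - ENNReal.ofReal (δ / 4) :=
    hfloor.frequently <| (hfreq.and_eventually hsmall).mono fun ε ⟨⟨a, b, hgap, hab⟩, hε⟩ =>
      have hr := inv_natFloor_inv_mem_Icc hε.1 hε.2
      ballDensity_le_of_gap hε.1 hr.1 hr.2 hδ.le hgap hab
  have hlt : 1 - ENNReal.ofReal (δ / 4) < 1 :=
    ENNReal.sub_lt_self ENNReal.one_ne_top one_ne_zero (by simpa using hδ)
  intro htendsto
  obtain ⟨n, hle, hgt⟩ := (hfreq_le.and_eventually (htendsto.eventually_const_lt hlt)).exists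
  exact hle.not_gt hgt

lemma ae_tendsto_ballDensity {s : Set ℝ} (hs : MeasurableSet s) :
    ∀ᵐ t, t ∈ s → Tendsto (fun n : ℕ => ballDensity s t (n : ℝ)⁻¹) atTop (𝓝 1) := by
  filter_upwards [Besicovitch.ae_tendsto_measure_inter_div_of_measurableSet volume hs]
    with t ht hts
  rw [indicator_of_mem hts] at ht
  exact ht.comp (tendsto_inv_atTop_nhdsGT_zero.comp tendsto_natCast_atTop_atTop)

section RandomSet

variable {Ω : Type*} [MeasurableSpace Ω] {H : Ω → Set ℝ}

lemma measurable_ballDensity (hH : MeasurableSet {p : ℝ × Ω | p.1 ∈ H p.2}) (r : ℝ) :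
    Measurable fun p : ℝ × Ω => ballDensity (H p.2) p.1 r := by
  simp only [ballDensity, Real.volume_closedBall]
  refine Measurable.div_const ?_ _
  exact measurable_measure_prodMk_left (ν := volume)
    (s := {q : (ℝ × Ω) × ℝ | q.2 ∈ H q.1.2 ∧ dist q.2 q.1.1 ≤ r})
    (((measurable_snd.prodMk measurable_fst.snd) hH).inter
      (measurableSet_le (measurable_snd.dist measurable_fst.fst) measurable_const))

lemma ae_ae_tendsto_ballDensity {P : Measure Ω} [SFinite P]
    (hH : MeasurableSet {p : ℝ × Ω | p.1 ∈ H p.2}) :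
    ∀ᵐ t, ∀ᵐ ω ∂P, t ∈ H ω → Tendsto (fun n : ℕ => ballDensity (H ω) t (n : ℝ)⁻¹) atTop (𝓝 1) := by
  refine (Measure.ae_ae_comm ?_).2
    (ae_of_all _ fun ω => ae_tendsto_ballDensity (measurable_prodMk_right hH))
  simpa only [imp_iff_not_or, ofPred_or, compl_ofPred] using
    hH.compl.union (measurableSet_tendsto _ fun n => measurable_ballDensity hH _)

end RandomSet

theorem prob_one_notMem_of_porousAt_one_general
    {Ω : Type*} [MeasurableSpace Ω] (P : Measure Ω) [IsProbabilityMeasure P]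
    (H : Ω → Set ℝ)
    (hgraph : MeasurableSet {p : ℝ × Ω | p.1 ∈ H p.2})
    (hscale : ∀ c : ℝ, 0 < c → ∀ t : ℝ, 0 < t →
      P {ω | t ∈ H ω ∧ PorousAt (H ω) t} = P {ω | c * t ∈ H ω ∧ PorousAt (H ω) (c * t)})
    (hporous : ∀ᵐ ω ∂P, PorousAt (H ω) 1) :
    P {ω | 1 ∉ H ω} = 1 := by
  obtain ⟨t, ht, hdens⟩ := Measure.exists_mem_of_measure_ne_zero_of_ae
    (by simp : volume (Ioi (0 : ℝ)) ≠ 0)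
    (ae_restrict_of_ae (ae_ae_tendsto_ballDensity (P := P) hgraph))
  have hporous_t : P {ω | t ∈ H ω ∧ PorousAt (H ω) t} = 0 :=
    measure_eq_zero_iff_ae_notMem.2 <|
      hdens.mono fun _ hT ⟨hmem, hpor⟩ => hpor.not_tendsto_ballDensity (hT hmem)
  have hporous_one : P {ω | 1 ∈ H ω ∧ PorousAt (H ω) 1} = 0 := by
    rwa [hscale t ht 1 one_pos, mul_one]
  have hnotMem : ∀ᵐ ω ∂P, 1 ∉ H ω := by
    filter_upwards [hporous, measure_eq_zero_iff_ae_notMem.1 hporous_one] with ω hpor hω h1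
    exact hω ⟨h1, hpor⟩
  exact ((ae_iff_measure_eq (measurable_prodMk_left hgraph).compl.nullMeasurableSet).1
    hnotMem).trans measure_univ

/-- Let `H` be a random closed subset of `[0, ∞)` with product-measurable
graph, whose law is scaling invariant in the sense that
`P (t ∈ H ∧ H porous at t) = P (c*t ∈ H ∧ H porous at c*t)` for all `c, t > 0`.
If `H` is porous at `1` almost surely, then `P (1 ∉ H) = 1`. -/
theorem prob_one_notMem_of_porousAt_one
    {Ω : Type*} [MeasurableSpace Ω] (P : Measure Ω) [IsProbabilityMeasure P]
    (H : Ω → Set ℝ)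
    (hclosed : ∀ ω, IsClosed (H ω)) (hsub : ∀ ω, H ω ⊆ Set.Ici (0 : ℝ))
    (hgraph : MeasurableSet {p : ℝ × Ω | p.1 ∈ H p.2})
    (hscale : ∀ c : ℝ, 0 < c → ∀ t : ℝ, 0 < t →
      P {ω | t ∈ H ω ∧ PorousAt (H ω) t} = P {ω | c * t ∈ H ω ∧ PorousAt (H ω) (c * t)})
    (hporous : ∀ᵐ ω ∂P, PorousAt (H ω) 1) :
    P {ω | 1 ∉ H ω} = 1 :=
  prob_one_notMem_of_porousAt_one_general P H hgraph hscale hporous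
end

section
/- Let H ⊆ ℝ and x ∈ ℝ, and let f(x, ε) denote the supremum of the lengths of the intervals contained in (x−ε, x+ε) \ H. Then the lower density of H at x satisfies liminf_{ε→0+} λ*([x−ε, x+ε] ∩ H)/(2ε) ≤ 1 − limsup_{ε→0+} f(x, ε)/(2ε), where λ* denotes Lebesgue outer measure. In particular, if H is porous at x, then liminf_{ε→0+} λ*([x−ε, x+ε] ∩ H)/(2ε) < 1. -/
open MeasureTheory Filter Topology

/-! A gap `(a, b)` of `H` inside `[x - ε, x + ε]` is a measurable set disjoint from `H`, so the
outer measure of `[x - ε, x + ε] ∩ H` is at most `2ε - (b - a)`; taking the supremum over gaps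
gives `λ*([x - ε, x + ε] ∩ H) ≤ 2ε - gapLength H x ε`, and dividing by `2ε` and passing to the
`liminf` gives the inequality. Porosity at `x` makes the subtracted `limsup` positive, being half
the one in `PorousAt`. -/

lemma toReal_volume_Icc_inter_add_le {H : Set ℝ} {a b c d : ℝ} (hcd : c ≤ d)
    (hgap : Set.Ioo a b ⊆ Set.Ioo c d \ H) :
    (volume (Set.Icc c d ∩ H)).toReal + (b - a) ≤ d - c := by
  have hdisj : Disjoint (Set.Icc c d ∩ H) (Set.Ioo a b) :=
    Set.disjoint_right.2 fun y hy hyH => (hgap hy).2 hyH.2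
  have hunion : Set.Icc c d ∩ H ∪ Set.Ioo a b ⊆ Set.Icc c d :=
    Set.union_subset Set.inter_subset_left
      ((hgap.trans Set.sdiff_subset).trans Set.Ioo_subset_Icc_self)
  have hsum : volume (Set.Icc c d ∩ H) + volume (Set.Ioo a b) ≤ volume (Set.Icc c d) := by
    rw [← measure_union hdisj measurableSet_Ioo]
    exact measure_mono hunion
  rw [Real.volume_Icc, Real.volume_Ioo] at hsum
  have hreal := ENNReal.toReal_mono ENNReal.ofReal_ne_top hsum
  -- `b ≤ a` is allowed: then `Ioo a b = ∅` and `(ofReal (b - a)).toReal = max (b - a) 0`.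
  rw [ENNReal.toReal_add (ne_top_of_le_ne_top ENNReal.ofReal_ne_top (le_self_add.trans hsum))
    ENNReal.ofReal_ne_top, ENNReal.toReal_ofReal (sub_nonneg.2 hcd),
    ENNReal.toReal_ofReal'] at hreal
  linarith [le_max_left (b - a) 0]

lemma toReal_volume_inter_add_gapLength_le (H : Set ℝ) (x : ℝ) {ε : ℝ} (hε : 0 ≤ ε) :
    (volume (Set.Icc (x - ε) (x + ε) ∩ H)).toReal + gapLength H x ε ≤ 2 * ε := by
  rw [← le_sub_iff_add_le']
  refine csSup_le ⟨0, x, x, by ring, by simp⟩ ?_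
  rintro _ ⟨a, b, rfl, hgap⟩
  linarith [toReal_volume_Icc_inter_add_le (by linarith) hgap]

lemma gapLength_nonneg (H : Set ℝ) (x : ℝ) {ε : ℝ} (hε : 0 ≤ ε) : 0 ≤ gapLength H x ε := by
  refine le_csSup ⟨2 * ε, ?_⟩ ⟨x, x, by ring, by simp⟩
  rintro _ ⟨a, b, rfl, hgap⟩
  linarith [toReal_volume_Icc_inter_add_le (by linarith) hgap, ENNReal.toReal_nonneg
    (a := volume (Set.Icc (x - ε) (x + ε) ∩ H))]

lemma gapLength_le_two_mul (H : Set ℝ) (x : ℝ) {ε : ℝ} (hε : 0 ≤ ε) :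
    gapLength H x ε ≤ 2 * ε := by
  linarith [toReal_volume_inter_add_gapLength_le H x hε, ENNReal.toReal_nonneg
    (a := volume (Set.Icc (x - ε) (x + ε) ∩ H))]

lemma toReal_volume_inter_div_le_one_sub (H : Set ℝ) (x : ℝ) {ε : ℝ} (hε : 0 < ε) :
    (volume (Set.Icc (x - ε) (x + ε) ∩ H)).toReal / (2 * ε) ≤ 1 - gapLength H x ε / (2 * ε) := by
  rw [div_le_iff₀ (by positivity), sub_mul, div_mul_cancel₀ _ (by positivity)]
  linarith [toReal_volume_inter_add_gapLength_le H x hε.le]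

lemma Filter.liminf_le_sub_limsup {α : Type*} {l : Filter α} [l.NeBot] {f g : α → ℝ} {c : ℝ}
    (hfg : ∀ᶠ a in l, f a ≤ c - g a) (hf : l.IsBoundedUnder (· ≥ ·) f)
    (hg_above : l.IsBoundedUnder (· ≤ ·) g) (hg_below : l.IsBoundedUnder (· ≥ ·) g) :
    liminf f l ≤ c - limsup g l := by
  rw [← liminf_const_sub l g c hg_above hg_below.isCoboundedUnder_le]
  obtain ⟨m, hm⟩ := hg_below
  have hsub_above : l.IsBoundedUnder (· ≤ ·) fun a => c - g a :=
    ⟨c - m, eventually_map.2 (eventually_map.1 hm |>.mono fun a ha => by linarith)⟩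
  exact liminf_le_liminf hfg hf hsub_above.isCoboundedUnder_ge

lemma limsup_gapLength_div_two_mul (H : Set ℝ) (x : ℝ) :
    limsup (fun ε => gapLength H x ε / (2 * ε)) (𝓝[>] 0) =
      limsup (fun ε => gapLength H x ε / ε) (𝓝[>] 0) / 2 := by
  have hpos : ∀ᶠ ε : ℝ in 𝓝[>] 0, 0 < ε := self_mem_nhdsWithin
  have hbdd : (𝓝[>] (0 : ℝ)).IsBoundedUnder (· ≤ ·) fun ε => gapLength H x ε / ε :=
    isBoundedUnder_of_eventually_le <| hpos.mono fun ε hε =>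
      (div_le_iff₀ hε).2 (gapLength_le_two_mul H x hε.le)
  have hcobdd : (𝓝[>] (0 : ℝ)).IsCoboundedUnder (· ≤ ·) fun ε => gapLength H x ε / ε :=
    (isBoundedUnder_of_eventually_ge <| hpos.mono fun ε hε =>
      div_nonneg (gapLength_nonneg H x hε.le) hε.le).isCoboundedUnder_le
  have hscale := (monotone_div_right_of_nonneg zero_le_two).map_limsup_of_continuousAt _
    (continuous_id.div_const 2).continuousAt hbdd hcobdd
  simp only [Function.comp_def, div_div, mul_comm _ (2 : ℝ)] at hscale
  exact hscale.symm

/-- For `H ⊆ ℝ` and `x ∈ ℝ`, the lower density of `H` at `x` satisfies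
`liminf_{ε→0+} λ*([x-ε, x+ε] ∩ H) / (2ε) ≤ 1 - limsup_{ε→0+} gapLength H x ε / (2ε)`,
where `λ*` is Lebesgue outer measure; in particular, if `H` is porous at `x` then the
lower density of `H` at `x` is `< 1`. -/
theorem lowerDensity_le_of_gapLength (H : Set ℝ) (x : ℝ) :
    (Filter.liminf
        (fun ε => (volume (Set.Icc (x - ε) (x + ε) ∩ H)).toReal / (2 * ε)) (𝓝[>] (0 : ℝ)) ≤
      1 - Filter.limsup (fun ε => gapLength H x ε / (2 * ε)) (𝓝[>] (0 : ℝ))) ∧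
    (PorousAt H x →
      Filter.liminf
        (fun ε => (volume (Set.Icc (x - ε) (x + ε) ∩ H)).toReal / (2 * ε)) (𝓝[>] (0 : ℝ)) < 1) := by
  have hpos : ∀ᶠ ε : ℝ in 𝓝[>] 0, 0 < ε := self_mem_nhdsWithin
  have hdensity := liminf_le_sub_limsup
    (hpos.mono fun ε hε => toReal_volume_inter_div_le_one_sub H x hε)
    (isBoundedUnder_of_eventually_ge (hpos.mono fun ε hε => by positivity))
    (isBoundedUnder_of_eventually_le (hpos.mono fun ε hε =>
      (div_le_one (by positivity)).2 (gapLength_le_two_mul H x hε.le)))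
    (isBoundedUnder_of_eventually_ge (hpos.mono fun ε hε =>
      div_nonneg (gapLength_nonneg H x hε.le) (by positivity)))
  refine ⟨hdensity, fun hporous => hdensity.trans_lt (sub_lt_self _ ?_)⟩
  rw [limsup_gapLength_div_two_mul]
  exact half_pos hporous
end

section
/- Let (η_n)_{n≥0} be a sequence of real-valued random variables on a probability space (Ω, F, P) with inf_{n≥0} |η_n| = 0 almost surely. For n ≥ 1 define Z_n = min_{0≤k<n} |η_k|, and for x > 0 define ν(x) = inf{n ≥ 0 : |η_n| < x} (finite almost surely for every x > 0). Then for every K > 0: limsup_{x→0+} P(x·ν(x) > 2K) ≤ limsup_{n→∞} P(n·Z_n ≥ K) ≤ limsup_{x→0+} P(x·ν(x) ≥ K). -/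
/-!
Both inequalities compare events path by path. Because `runMin η n ω` is the minimum of `|η k ω|`
over `k < n`, we get `n ≤ hitTime η x ω ↔ x ≤ runMin η n ω` whenever some `|η m ω| < x`, and this
holds almost surely for every `x > 0`. Taking `x = K / n` puts `{K ≤ n Z_n}` inside
`{K ≤ x ν(x)}` up to a null set. Taking `n = ⌊2K / x⌋₊ + 1` puts `{2K < x ν(x)}` inside
`{K ≤ n Z_n}`. As `n → ∞` we have `K / n → 0+`, and as `x → 0+` we have `⌊2K / x⌋₊ + 1 → ∞`.
-/

open MeasureTheory Filter Topology

/-- `runMin η n ω = min_{0 ≤ k < n} |η k ω|`. -/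
noncomputable def runMin {Ω : Type*} (η : ℕ → Ω → ℝ) (n : ℕ) (ω : Ω) : ℝ :=
  sInf ((fun k => |η k ω|) '' Set.Iio n)

/-- `hitTime η x ω = inf {n ≥ 0 : |η n ω| < x}`. -/
noncomputable def hitTime {Ω : Type*} (η : ℕ → Ω → ℝ) (x : ℝ) (ω : Ω) : ℕ :=
  sInf {n | |η n ω| < x}

section Pathwise

variable {Ω : Type*} {η : ℕ → Ω → ℝ} {ω : Ω} {x : ℝ} {n : ℕ}

theorem le_runMin_iff (hn : 0 < n) : x ≤ runMin η n ω ↔ ∀ k < n, x ≤ |η k ω| := by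
  unfold runMin
  constructor
  · rintro h k hk
    exact h.trans (csInf_le ⟨0, by rintro _ ⟨m, -, rfl⟩; positivity⟩ ⟨k, hk, rfl⟩)
  · rintro h
    exact le_csInf ⟨_, 0, hn, rfl⟩ (by rintro _ ⟨m, hm, rfl⟩; exact h m hm)

theorem le_abs_of_lt_hitTime {k : ℕ} (hk : k < hitTime η x ω) : x ≤ |η k ω| :=
  not_lt.1 (Nat.notMem_of_lt_sInf hk)

theorem le_hitTime_of_forall_le_abs (hne : ∃ m, |η m ω| < x) (h : ∀ k < n, x ≤ |η k ω|) :
    n ≤ hitTime η x ω :=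
  le_csInf hne fun m hm => not_lt.1 fun hmn => (h m hmn).not_gt hm

theorem le_runMin_of_le_hitTime (hn : 0 < n) (h : n ≤ hitTime η x ω) : x ≤ runMin η n ω :=
  (le_runMin_iff hn).2 fun _ hk => le_abs_of_lt_hitTime (hk.trans_le h)

theorem le_hitTime_of_le_runMin (hn : 0 < n) (hne : ∃ m, |η m ω| < x)
    (h : x ≤ runMin η n ω) : n ≤ hitTime η x ω :=
  le_hitTime_of_forall_le_abs hne ((le_runMin_iff hn).1 h)

theorem lt_mul_runMin_of_lt_mul_hitTime {c : ℝ} (hc : 0 ≤ c) (hx : 0 < x)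
    (h : c < x * hitTime η x ω) :
    c < ((⌊c / x⌋₊ + 1 : ℕ) : ℝ) * runMin η (⌊c / x⌋₊ + 1) ω := by
  have hn : ⌊c / x⌋₊ + 1 ≤ hitTime η x ω :=
    (Nat.floor_lt (div_nonneg hc hx.le)).2 (by rw [div_lt_iff₀ hx]; linarith)
  have hcn : c < ((⌊c / x⌋₊ + 1 : ℕ) : ℝ) * x := by
    push_cast
    exact (div_lt_iff₀ hx).1 (Nat.lt_floor_add_one _)
  exact hcn.trans_le (by gcongr; exact le_runMin_of_le_hitTime (Nat.succ_pos _) hn)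

theorem le_div_mul_hitTime_of_le_mul_runMin {K : ℝ} (hK : 0 < K) (hn : 0 < n)
    (hne : ∃ m, |η m ω| < K / n) (h : K ≤ n * runMin η n ω) :
    K ≤ K / n * hitTime η (K / n) ω := by
  have hn' : (0 : ℝ) < n := Nat.cast_pos.2 hn
  have hZ : K / n ≤ runMin η n ω := by rwa [div_le_iff₀ hn', mul_comm]
  have hν : (n : ℝ) ≤ hitTime η (K / n) ω := Nat.cast_le.2 (le_hitTime_of_le_runMin hn hne hZ)
  calc K = K / n * n := (div_mul_cancel₀ K hn'.ne').symm
    _ ≤ K / n * hitTime η (K / n) ω := by gcongr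

end Pathwise

theorem tendsto_floor_div_add_one_nhdsGT_zero {c : ℝ} (hc : 0 < c) :
    Tendsto (fun x : ℝ => ⌊c / x⌋₊ + 1) (𝓝[>] 0) atTop :=
  (tendsto_add_atTop_nat 1).comp
    (tendsto_nat_floor_atTop.comp (tendsto_inv_nhdsGT_zero.const_mul_atTop hc))

theorem tendsto_div_natCast_nhdsGT_zero {c : ℝ} (hc : 0 < c) :
    Tendsto (fun n : ℕ => c / n) atTop (𝓝[>] 0) :=
  tendsto_nhdsWithin_of_tendsto_nhds_of_eventually_within _
    (tendsto_const_div_atTop_nhds_zero_nat c)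
    (eventually_gt_atTop 0 |>.mono fun _ hn => div_pos hc (Nat.cast_pos.2 hn))

theorem limsup_prob_hitTime_runMin_general
    {Ω : Type*} [MeasurableSpace Ω] (P : Measure Ω) [IsProbabilityMeasure P]
    (η : ℕ → Ω → ℝ)
    (hinf : ∀ᵐ ω ∂P, ⨅ n, |η n ω| = 0)
    (K : ℝ) (hK : 0 < K) :
    Filter.limsup (fun x : ℝ => P {ω | 2 * K < x * (hitTime η x ω : ℝ)}) (𝓝[>] (0 : ℝ)) ≤
        Filter.limsup (fun n : ℕ => P {ω | K ≤ (n : ℝ) * runMin η n ω}) atTop ∧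
      Filter.limsup (fun n : ℕ => P {ω | K ≤ (n : ℝ) * runMin η n ω}) atTop ≤
        Filter.limsup (fun x : ℝ => P {ω | K ≤ x * (hitTime η x ω : ℝ)}) (𝓝[>] (0 : ℝ)) := by
  have hne : ∀ x : ℝ, 0 < x → ∀ᵐ ω ∂P, ∃ m, |η m ω| < x := fun x hx =>
    hinf.mono fun ω hω => exists_lt_of_ciInf_lt (hω ▸ hx)
  constructor
  · refine (limsup_le_limsup ?_).trans
      (tendsto_floor_div_add_one_nhdsGT_zero (by positivity : (0 : ℝ) < 2 * K)).limsup_comp_le_limsup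
    filter_upwards [self_mem_nhdsWithin] with x (hx : 0 < x)
    refine measure_mono fun ω (hω : 2 * K < _) => ?_
    exact (lt_mul_runMin_of_lt_mul_hitTime (by positivity) hx hω).le.trans' (by linarith)
  · refine (limsup_le_limsup ?_).trans (tendsto_div_natCast_nhdsGT_zero hK).limsup_comp_le_limsup
    filter_upwards [eventually_gt_atTop 0] with n hn
    refine measure_mono_ae ?_
    filter_upwards [hne _ (div_pos hK (Nat.cast_pos.2 hn))] with ω hω
    exact le_div_mul_hitTime_of_le_mul_runMin hK hn hω

/-- Let `(η n)` be real random variables with `inf_n |η n| = 0` a.s.;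
let `Z n = min_{k < n} |η k|` (for `n ≥ 1`) and `ν x = inf {n : |η n| < x}` (for `x > 0`).
Then for every `K > 0`:
`limsup_{x→0+} P (x ν(x) > 2K) ≤ limsup_{n→∞} P (n Z_n ≥ K) ≤ limsup_{x→0+} P (x ν(x) ≥ K)`. -/
theorem limsup_prob_hitTime_runMin
    {Ω : Type*} [MeasurableSpace Ω] (P : Measure Ω) [IsProbabilityMeasure P]
    (η : ℕ → Ω → ℝ) (hmeas : ∀ n, Measurable (η n))
    (hinf : ∀ᵐ ω ∂P, ⨅ n, |η n ω| = 0)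
    (K : ℝ) (hK : 0 < K) :
    Filter.limsup (fun x : ℝ => P {ω | 2 * K < x * (hitTime η x ω : ℝ)}) (𝓝[>] (0 : ℝ)) ≤
        Filter.limsup (fun n : ℕ => P {ω | K ≤ (n : ℝ) * runMin η n ω}) atTop ∧
      Filter.limsup (fun n : ℕ => P {ω | K ≤ (n : ℝ) * runMin η n ω}) atTop ≤
        Filter.limsup (fun x : ℝ => P {ω | K ≤ x * (hitTime η x ω : ℝ)}) (𝓝[>] (0 : ℝ)) :=
  limsup_prob_hitTime_runMin_general P η hinf K hK
end
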